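/- arXiv:math/9502228 — 9 statements merged into one kernel-verified Lean document; each statement's English description precedes it below -/
import Mathlib

section
/- For every θ ∈ ℝ and every integer p, Σ_{k ∈ ℤ} (k − 1/2)^{−2} cos(p(k − 1/2)θ) = 2π² (−1)^{⌊pρ⌋} ( ⌊pρ⌋ + 1/2 − pρ ), where ρ = θ/(2π). Equivalently, this sum also equals −2π² (−1)^{⌈pρ⌉} ( ⌈pρ⌉ − 1/2 − pρ ) whenever pρ ∉ ℤ. -/
open Real

/-- `τ_p = Σ_{k ∈ ℤ} (k − 1/2)⁻² cos(p (k − 1/2) θ)`. -/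
noncomputable def tau (θ : ℝ) (p : ℤ) : ℝ :=
  ∑' k : ℤ, (((k : ℝ) - 1 / 2) ^ 2)⁻¹ * Real.cos ((p : ℝ) * ((k : ℝ) - 1 / 2) * θ)

lemma b2eval (y : ℝ) :
    (Polynomial.map (algebraMap ℚ ℝ) (Polynomial.bernoulli 2)).eval y = y ^ 2 - y + 1 / 6 := by
  simp_rw [Polynomial.bernoulli, Finset.sum_range_succ]
  simp [bernoulli_eq_bernoulli'_of_ne_one, bernoulli'_two, bernoulli'_one, bernoulli'_zero]
  ring

lemma hasSum_g {y : ℝ} (hy : y ∈ Set.Icc (0:ℝ) 1) :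
    HasSum (fun n : ℕ => 1 / (n : ℝ) ^ 2 * Real.cos (2 * π * n * y))
      (π ^ 2 * (y ^ 2 - y + 1 / 6)) := by
  have h := hasSum_one_div_nat_pow_mul_cos (k := 1) one_ne_zero hy
  rw [b2eval] at h
  have e1 : (fun n : ℕ => 1 / (n : ℝ) ^ 2 * Real.cos (2 * π * n * y))
      = fun n : ℕ => 1 / (n : ℝ) ^ (2 * 1) * Real.cos (2 * π * n * y) := by
    funext n; norm_num
  have e2 : π ^ 2 * (y ^ 2 - y + 1 / 6)
      = (-1 : ℝ) ^ (1 + 1) * (2 * π) ^ (2 * 1) / 2 / (2 * 1).factorial * (y ^ 2 - y + 1 / 6) := by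
    have : (((2 * 1).factorial : ℕ) : ℝ) = 2 := by norm_num [Nat.factorial]
    rw [this]; ring
  rw [e1, e2]; exact h

lemma hasSum_odd {y : ℝ} (hy : y ∈ Set.Icc (0:ℝ) (1/2)) :
    HasSum (fun n : ℕ => 1 / (2 * (n : ℝ) + 1) ^ 2 * Real.cos (2 * π * (2 * (n : ℝ) + 1) * y))
      (π ^ 2 * (1 - 4 * y) / 8) := by
  obtain ⟨hy0, hy1⟩ := hy
  have hfull := hasSum_g (y := y) ⟨hy0, by linarith⟩
  have h2y := hasSum_g (y := 2 * y) ⟨by linarith, by linarith⟩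
  have heven : HasSum (fun n : ℕ => 1 / ((2 * n : ℕ) : ℝ) ^ 2 * Real.cos (2 * π * ((2 * n : ℕ) : ℝ) * y))
      (π ^ 2 * ((2 * y) ^ 2 - 2 * y + 1 / 6) / 4) := by
    have := h2y.div_const 4
    convert this using 2 with n
    case e'_3 => rfl
    push_cast
    rw [show 2 * π * (2 * (n:ℝ)) * y = 2 * π * (n:ℝ) * (2 * y) by ring]
    ring
  have hinj : Function.Injective (fun n : ℕ => 2 * n + 1) := fun a b h => by
    simp only [] at h; omega
  have hoddsum : Summable (fun n : ℕ => 1 / ((2 * n + 1 : ℕ) : ℝ) ^ 2 *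
      Real.cos (2 * π * ((2 * n + 1 : ℕ) : ℝ) * y)) := by
    exact hfull.summable.comp_injective hinj
  have hodd := hoddsum.hasSum
  have hsplit := HasSum.even_add_odd
    (f := fun m : ℕ => 1 / (m : ℝ) ^ 2 * Real.cos (2 * π * (m : ℝ) * y)) heven hodd
  have heq := hsplit.unique hfull
  have : (∑' n : ℕ, 1 / ((2 * n + 1 : ℕ) : ℝ) ^ 2 * Real.cos (2 * π * ((2 * n + 1 : ℕ) : ℝ) * y))
      = π ^ 2 * (1 - 4 * y) / 8 := by
    linear_combination heq
  rw [this] at hodd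
  convert hodd using 2 with n
  push_cast
  ring_nf

lemma hasSum_base {x : ℝ} (hx0 : 0 ≤ x) (hx1 : x ≤ 2 * π) :
    HasSum (fun k : ℤ => (((k : ℝ) - 1 / 2) ^ 2)⁻¹ * Real.cos (((k : ℝ) - 1 / 2) * x))
      (π ^ 2 - π * x) := by
  have hπ := Real.pi_pos
  set y : ℝ := x / (4 * π) with hy
  have hy0 : 0 ≤ y := by positivity
  have hy1 : y ≤ 1 / 2 := by
    rw [hy, div_le_iff₀ (by positivity)]; linarith
  have hodd := hasSum_odd ⟨hy0, hy1⟩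
  have hu : HasSum (fun n : ℕ => (((n : ℝ) + 1 / 2) ^ 2)⁻¹ * Real.cos (((n : ℝ) + 1 / 2) * x))
      (π ^ 2 * (1 - 4 * y) / 2) := by
    have h4 := hodd.mul_left 4
    have hfun : (fun n : ℕ => (((n : ℝ) + 1 / 2) ^ 2)⁻¹ * Real.cos (((n : ℝ) + 1 / 2) * x))
        = fun n : ℕ => 4 * (1 / (2 * (n : ℝ) + 1) ^ 2 * Real.cos (2 * π * (2 * (n : ℝ) + 1) * y)) := by
      funext n
      have h2 : (2 * (n : ℝ) + 1) ≠ 0 := by positivity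
      have harg : ((n : ℝ) + 1 / 2) * x = 2 * π * (2 * (n : ℝ) + 1) * y := by
        rw [hy]; field_simp; ring
      rw [harg, show (((n : ℝ) + 1 / 2) ^ 2)⁻¹ = 4 * (1 / (2 * (n : ℝ) + 1) ^ 2) by
        field_simp; ring]
      ring
    rw [hfun, show π ^ 2 * (1 - 4 * y) / 2 = 4 * (π ^ 2 * (1 - 4 * y) / 8) by ring]
    exact h4
  set t : ℤ → ℝ := fun k => (((k : ℝ) - 1 / 2) ^ 2)⁻¹ * Real.cos (((k : ℝ) - 1 / 2) * x) with ht
  have hprs : ∀ n : ℕ, t ((n : ℤ) + 1) = (((n : ℝ) + 1 / 2) ^ 2)⁻¹ *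
      Real.cos (((n : ℝ) + 1 / 2) * x) := by
    intro n
    simp only [ht]
    push_cast
    rw [show (n : ℝ) + 1 - 1 / 2 = (n : ℝ) + 1 / 2 by ring]
  have ht0 : t 0 = ((((0 : ℕ) : ℝ) + 1 / 2) ^ 2)⁻¹ * Real.cos ((((0 : ℕ) : ℝ) + 1 / 2) * x) := by
    simp only [ht]
    push_cast
    rw [show (0 : ℝ) - 1 / 2 = -(0 + 1 / 2) by ring, neg_sq,
      show (-((0 : ℝ) + 1 / 2)) * x = -((0 + 1 / 2) * x) by ring, Real.cos_neg]
  have hpos : HasSum (fun n : ℕ => t (n : ℤ)) (π ^ 2 * (1 - 4 * y) / 2 + t 0) := by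
    have h1 : HasSum (fun n : ℕ => t (((n + 1 : ℕ) : ℤ))) (π ^ 2 * (1 - 4 * y) / 2) := by
      have : ∀ n : ℕ, t (((n + 1 : ℕ) : ℤ)) = (((n : ℝ) + 1 / 2) ^ 2)⁻¹ *
          Real.cos (((n : ℝ) + 1 / 2) * x) := by
        intro n
        rw [show ((n + 1 : ℕ) : ℤ) = (n : ℤ) + 1 by push_cast; ring, hprs]
      simp_rw [this]; exact hu
    have h := (hasSum_nat_add_iff (f := fun n : ℕ => t (n : ℤ)) 1).mp h1
    simpa using h
  have hneg : HasSum (fun n : ℕ => t (-((n : ℤ) + 1)))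
      (π ^ 2 * (1 - 4 * y) / 2 - t 0) := by
    have hts : ∀ n : ℕ, t (-((n : ℤ) + 1)) = ((((n + 1 : ℕ) : ℝ) + 1 / 2) ^ 2)⁻¹ *
        Real.cos ((((n + 1 : ℕ) : ℝ) + 1 / 2) * x) := by
      intro n
      simp only [ht]
      push_cast
      rw [show -((n : ℝ) + 1) - 1 / 2 = -(((n : ℝ) + 1) + 1 / 2) by ring, neg_sq,
        show (-(((n : ℝ) + 1) + 1 / 2)) * x = -((((n : ℝ) + 1) + 1 / 2) * x) by ring,
        Real.cos_neg]
    have hu' : HasSum (fun n : ℕ => ((((n + 1 : ℕ) : ℝ) + 1 / 2) ^ 2)⁻¹ *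
        Real.cos ((((n + 1 : ℕ) : ℝ) + 1 / 2) * x)) (π ^ 2 * (1 - 4 * y) / 2 - t 0) := by
      refine (hasSum_nat_add_iff
        (f := fun n : ℕ => (((n : ℝ) + 1 / 2) ^ 2)⁻¹ * Real.cos (((n : ℝ) + 1 / 2) * x)) 1).mpr ?_
      rw [Finset.sum_range_one, ← ht0,
        show π ^ 2 * (1 - 4 * y) / 2 - t 0 + t 0 = π ^ 2 * (1 - 4 * y) / 2 by ring]
      exact hu
    simp_rw [hts]; exact hu'
  have htotal := hpos.of_nat_of_neg_add_one hneg
  have hval : π ^ 2 * (1 - 4 * y) / 2 + t 0 + (π ^ 2 * (1 - 4 * y) / 2 - t 0)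
      = π ^ 2 - π * x := by
    rw [hy]
    field_simp
    ring
  rw [hval] at htotal
  exact htotal

lemma hasSum_main (x : ℝ) :
    HasSum (fun k : ℤ => (((k : ℝ) - 1 / 2) ^ 2)⁻¹ * Real.cos (((k : ℝ) - 1 / 2) * x))
      (2 * π ^ 2 * (-1 : ℝ) ^ ⌊x / (2 * π)⌋ * ((⌊x / (2 * π)⌋ : ℝ) + 1 / 2 - x / (2 * π))) := by
  have hπ := Real.pi_pos
  set n : ℤ := ⌊x / (2 * π)⌋ with hn
  set r : ℝ := x - n * (2 * π) with hr
  have h2π : (0 : ℝ) < 2 * π := by positivity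
  have h1 : (n : ℝ) * (2 * π) ≤ x := (le_div_iff₀ h2π).mp (Int.floor_le (x / (2 * π)))
  have h2 : x < ((n : ℝ) + 1) * (2 * π) := by
    have := Int.lt_floor_add_one (x / (2 * π))
    rw [div_lt_iff₀ h2π] at this
    push_cast at this
    exact this
  have hr0 : 0 ≤ r := by rw [hr]; linarith
  have hr1 : r ≤ 2 * π := by rw [hr]; nlinarith
  have hbase := hasSum_base hr0 hr1
  have hterm : ∀ k : ℤ, (-1 : ℝ) ^ n *
      ((((k : ℝ) - 1 / 2) ^ 2)⁻¹ * Real.cos (((k : ℝ) - 1 / 2) * r))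
      = (((k : ℝ) - 1 / 2) ^ 2)⁻¹ * Real.cos (((k : ℝ) - 1 / 2) * x) := by
    intro k
    have hx : ((k : ℝ) - 1 / 2) * x
        = (((k : ℝ) - 1 / 2) * r - (n : ℤ) * π) + ((n * k : ℤ)) * (2 * π) := by
      rw [hr]; push_cast; ring
    rw [hx, Real.cos_add_int_mul_two_pi, Real.cos_sub_int_mul_pi]
    ring
  have h := hbase.mul_left ((-1 : ℝ) ^ n)
  simp_rw [hterm] at h
  convert h using 1
  case e'_3 => rfl
  have hx2 : x / (2 * π) = r / (2 * π) + n := by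
    rw [hr]; field_simp; ring
  rw [hx2]
  have hrd : (n : ℝ) + 1 / 2 - (r / (2 * π) + n) = (π ^ 2 - π * r) / (2 * π ^ 2) := by
    field_simp; ring
  rw [hrd, mul_div_assoc', mul_comm (2 * π ^ 2) ((-1 : ℝ) ^ n), mul_div_assoc]
  rw [mul_div_assoc']
  congr 1
  field_simp

theorem stmt_3' (θ : ℝ) (ρ : ℝ) (hρ : ρ = θ / (2 * π)) (p : ℤ) :
    (∑' k : ℤ, (((k : ℝ) - 1 / 2) ^ 2)⁻¹ * Real.cos ((p : ℝ) * ((k : ℝ) - 1 / 2) * θ)) =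
      2 * π ^ 2 * (-1 : ℝ) ^ ⌊(p : ℝ) * ρ⌋ * ((⌊(p : ℝ) * ρ⌋ : ℝ) + 1 / 2 - (p : ℝ) * ρ) ∧
    ((p : ℝ) * ρ ∉ Set.range ((↑) : ℤ → ℝ) →
      (∑' k : ℤ, (((k : ℝ) - 1 / 2) ^ 2)⁻¹ * Real.cos ((p : ℝ) * ((k : ℝ) - 1 / 2) * θ)) =
        -(2 * π ^ 2) * (-1 : ℝ) ^ ⌈(p : ℝ) * ρ⌉ *
          ((⌈(p : ℝ) * ρ⌉ : ℝ) - 1 / 2 - (p : ℝ) * ρ)) := by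
  have hπ := Real.pi_pos
  have hx : (∑' k : ℤ, (((k : ℝ) - 1 / 2) ^ 2)⁻¹ * Real.cos ((p : ℝ) * ((k : ℝ) - 1 / 2) * θ))
      = ∑' k : ℤ, (((k : ℝ) - 1 / 2) ^ 2)⁻¹ * Real.cos (((k : ℝ) - 1 / 2) * ((p : ℝ) * θ)) :=
    tsum_congr fun k => by
      rw [show (p : ℝ) * ((k : ℝ) - 1 / 2) * θ = ((k : ℝ) - 1 / 2) * ((p : ℝ) * θ) by ring]
  have hρ' : (p : ℝ) * ρ = ((p : ℝ) * θ) / (2 * π) := by rw [hρ, mul_div_assoc']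
  have h1 : (∑' k : ℤ, (((k : ℝ) - 1 / 2) ^ 2)⁻¹ * Real.cos ((p : ℝ) * ((k : ℝ) - 1 / 2) * θ))
      = 2 * π ^ 2 * (-1 : ℝ) ^ ⌊(p : ℝ) * ρ⌋ * ((⌊(p : ℝ) * ρ⌋ : ℝ) + 1 / 2 - (p : ℝ) * ρ) := by
    rw [hx, (hasSum_main ((p : ℝ) * θ)).tsum_eq, hρ']
  refine ⟨h1, fun hnot => ?_⟩
  have hfr : Int.fract ((p : ℝ) * ρ) ≠ 0 := by
    intro h0
    rw [← Int.self_sub_floor, sub_eq_zero] at h0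
    exact hnot ⟨⌊(p : ℝ) * ρ⌋, h0.symm⟩
  have hceil : ⌈(p : ℝ) * ρ⌉ = ⌊(p : ℝ) * ρ⌋ + 1 := by
    have h := Int.ceil_eq_add_one_sub_fract hfr
    rw [← Int.self_sub_floor] at h
    have : (⌈(p : ℝ) * ρ⌉ : ℝ) = ((⌊(p : ℝ) * ρ⌋ + 1 : ℤ) : ℝ) := by push_cast; linarith
    exact_mod_cast this
  rw [h1, hceil]
  push_cast
  rw [zpow_add_one₀ (by norm_num : (-1 : ℝ) ≠ 0)]
  ring

/-- Evaluation of `τ_p` via elementary Fourier series, in floor form, together with the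
ceiling form when `pρ` is not an integer. -/
theorem stmt_3 (θ : ℝ) (ρ : ℝ) (hρ : ρ = θ / (2 * π)) (p : ℤ) :
    tau θ p =
      2 * π ^ 2 * (-1 : ℝ) ^ ⌊(p : ℝ) * ρ⌋ * ((⌊(p : ℝ) * ρ⌋ : ℝ) + 1 / 2 - (p : ℝ) * ρ) ∧
    ((p : ℝ) * ρ ∉ Set.range ((↑) : ℤ → ℝ) →
      tau θ p =
        -(2 * π ^ 2) * (-1 : ℝ) ^ ⌈(p : ℝ) * ρ⌉ *
          ((⌈(p : ℝ) * ρ⌉ : ℝ) - 1 / 2 - (p : ℝ) * ρ)) := by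
  unfold tau
  exact stmt_3' θ ρ hρ p
end

section
/- Let ρ ∈ ℝ be irrational and let ξ, η be positive integers with ξ + η even, say ξ + η = 2n with n a positive integer. If {ξρ} ≤ {nρ} and {nρ} ≤ {ηρ}, then ⌊ξρ⌋ and ⌊ηρ⌋ have the same parity, i.e., ⌊ηρ⌋ − ⌊ξρ⌋ is an even integer. -/
/-- If `ρ` is irrational, `ξ + η = 2n` with `{ξρ} ≤ {nρ} ≤ {ηρ}`, then
`⌊ξρ⌋` and `⌊ηρ⌋` have the same parity. -/
theorem stmt_7 (ρ : ℝ) (hρ : Irrational ρ) (ξ η n : ℤ)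
    (hξ : 0 < ξ) (hη : 0 < η) (hn : 0 < n) (hsum : ξ + η = 2 * n)
    (h1 : Int.fract ((ξ : ℝ) * ρ) ≤ Int.fract ((n : ℝ) * ρ))
    (h2 : Int.fract ((n : ℝ) * ρ) ≤ Int.fract ((η : ℝ) * ρ)) :
    Even (⌊(η : ℝ) * ρ⌋ - ⌊(ξ : ℝ) * ρ⌋) := by
  have heq : (ξ : ℝ) * ρ + (η : ℝ) * ρ = 2 * ((n : ℝ) * ρ) := by
    have : ((ξ : ℝ) + η) = 2 * n := by exact_mod_cast congrArg (fun z : ℤ => (z : ℝ)) hsum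
    linear_combination this * ρ
  have e : ((⌊(ξ : ℝ) * ρ⌋ + ⌊(η : ℝ) * ρ⌋ - 2 * ⌊(n : ℝ) * ρ⌋ : ℤ) : ℝ) =
      Int.fract ((n : ℝ) * ρ) * 2 - Int.fract ((ξ : ℝ) * ρ) - Int.fract ((η : ℝ) * ρ) := by
    simp only [Int.fract]
    push_cast
    linarith [heq]
  have hb1 := Int.fract_lt_one ((ξ : ℝ) * ρ)
  have hb2 := Int.fract_lt_one ((η : ℝ) * ρ)
  have hb3 := Int.fract_nonneg ((ξ : ℝ) * ρ)
  have hb4 := Int.fract_nonneg ((η : ℝ) * ρ)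
  have hz : ⌊(ξ : ℝ) * ρ⌋ + ⌊(η : ℝ) * ρ⌋ - 2 * ⌊(n : ℝ) * ρ⌋ = 0 := by
    have hlt : ((⌊(ξ : ℝ) * ρ⌋ + ⌊(η : ℝ) * ρ⌋ - 2 * ⌊(n : ℝ) * ρ⌋ : ℤ) : ℝ) < 1 := by
      rw [e]; linarith
    have hgt : (-1 : ℝ) < ((⌊(ξ : ℝ) * ρ⌋ + ⌊(η : ℝ) * ρ⌋ - 2 * ⌊(n : ℝ) * ρ⌋ : ℤ) : ℝ) := by
      rw [e]; linarith
    have h1' : (⌊(ξ : ℝ) * ρ⌋ + ⌊(η : ℝ) * ρ⌋ - 2 * ⌊(n : ℝ) * ρ⌋ : ℤ) < 1 := by exact_mod_cast hlt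
    have h2' : (-1 : ℤ) < ⌊(ξ : ℝ) * ρ⌋ + ⌊(η : ℝ) * ρ⌋ - 2 * ⌊(n : ℝ) * ρ⌋ := by exact_mod_cast hgt
    omega
  exact ⟨⌊(n : ℝ) * ρ⌋ - ⌊(ξ : ℝ) * ρ⌋, by omega⟩
end

section
/- Let θ ∈ ℝ with ρ = θ/(2π) irrational, and let ξ, η, N be positive integers with {ξρ} ≤ {Nρ} ≤ {ηρ}. Then τ_{N−ξ} = (−1)^{⌊ξρ⌋} τ_N + 2π² (−1)^{⌊Nρ⌋ − ⌊ξρ⌋} {ξρ}, and τ_{N−η} = −(−1)^{⌊ηρ⌋} τ_N + 2π² (−1)^{⌊Nρ⌋ − ⌊ηρ⌋} (1 − {ηρ}). -/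
open Real

lemma hS (x : ℝ) (hx : x ∈ Set.Icc (0:ℝ) 1) :
    HasSum (fun n : ℕ => ((n:ℝ)^2)⁻¹ * Real.cos (2*π*n*x)) (π^2 * (x^2 - x + 1/6)) := by
  have h := hasSum_one_div_nat_pow_mul_cos (k := 1) one_ne_zero hx
  norm_num at h
  have hb : (Polynomial.aeval x) (Polynomial.bernoulli 2) = x^2 - x + 1/6 := by
    simp [Polynomial.bernoulli, Finset.sum_range_succ, bernoulli]
    ring
  rw [hb] at h
  convert h using 2
  ring

noncomputable def B2 (x : ℝ) : ℝ := Int.fract x ^ 2 - Int.fract x + 1/6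

lemma hS' (x : ℝ) :
    HasSum (fun n : ℕ => ((n:ℝ)^2)⁻¹ * Real.cos (2*π*n*x)) (π^2 * B2 x) := by
  have h := hS (Int.fract x) ⟨Int.fract_nonneg x, (Int.fract_lt_one x).le⟩
  convert h using 2 with n
  have harg : 2*π*(n:ℝ)*x = 2*π*n*(Int.fract x) + (((n:ℤ)*⌊x⌋ : ℤ):ℝ)*(2*π) := by
    rw [Int.fract]; push_cast; ring
  rw [harg, Real.cos_add_int_mul_two_pi]
  rfl

lemma hOdd (x : ℝ) :
    HasSum (fun n : ℕ => (((2*n+1:ℕ):ℝ)^2)⁻¹ * Real.cos (2*π*(2*n+1:ℕ)*x))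
      (π^2 * (B2 x - (1/4) * B2 (2*x))) := by
  have hT := hS' x
  have hE2 := hS' (2*x)
  set g : ℕ → ℝ := fun n => ((n:ℝ)^2)⁻¹ * Real.cos (2*π*n*x) with hg
  have hinj2 : Function.Injective (fun n : ℕ => 2*n) := fun a b h => by simpa using h
  set gE : ℕ → ℝ := fun n => if Even n then g n else 0 with hgE
  have hEvensum : HasSum gE (π^2 * ((1/4) * B2 (2*x))) := by
    rw [← hinj2.hasSum_iff (by
      intro n hn
      have hodd : ¬ Even n := by
        rintro ⟨c, hc⟩
        exact hn ⟨c, by simpa using by omega⟩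
      simp [hgE, hodd])]
    have heq : (gE ∘ fun n : ℕ => 2*n) = fun n : ℕ => (1/4) * (((n:ℝ)^2)⁻¹ * Real.cos (2*π*n*(2*x))) := by
      funext n
      simp only [Function.comp, hgE, hg, if_pos (even_two_mul n)]
      push_cast
      rw [show 2*π*(2*(n:ℝ))*x = 2*π*n*(2*x) by ring, mul_pow, mul_inv]
      norm_num
      ring
    rw [heq]
    convert hE2.mul_left (1/4) using 1
    · rfl
    ring
  have hOddsum : HasSum (fun n => g n - gE n) (π^2 * B2 x - π^2 * ((1/4) * B2 (2*x))) :=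
    hT.sub hEvensum
  have hinj1 : Function.Injective (fun n : ℕ => 2*n+1) := fun a b h => by simpa using h
  rw [show π^2 * (B2 x - (1/4) * B2 (2*x)) = π^2 * B2 x - π^2 * ((1/4) * B2 (2*x)) by ring]
  have hvan : ∀ n, n ∉ Set.range (fun n : ℕ => 2*n+1) → g n - gE n = 0 := by
    intro n hn
    have heven : Even n := by
      rcases Nat.even_or_odd n with h | h
      · exact h
      · obtain ⟨c, hc⟩ := h
        exact absurd (⟨c, show 2*c+1 = n by omega⟩ : n ∈ Set.range (fun n : ℕ => 2*n+1)) hn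
    simp [hgE, heven]
  have := (hinj1.hasSum_iff hvan).2 hOddsum
  convert this using 2 with n
  simp only [Function.comp, hgE]
  rw [if_neg (by simp [Nat.even_add_one, parity_simps])]
  ring

lemma hasSum_master (t : ℝ) :
    HasSum (fun k : ℤ => (((k:ℝ) - 1/2)^2)⁻¹ * Real.cos (((k:ℝ) - 1/2) * (2*π*t)))
      (8 * (π^2 * (B2 (t/2) - (1/4) * B2 t))) := by
  set F : ℤ → ℝ := fun k => (((k:ℝ) - 1/2)^2)⁻¹ * Real.cos (((k:ℝ) - 1/2) * (2*π*t)) with hF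
  set o : ℕ → ℝ := fun n => (((2*n+1:ℕ):ℝ)^2)⁻¹ * Real.cos (2*π*(2*n+1:ℕ)*(t/2)) with ho
  have hBt : B2 (2 * (t/2)) = B2 t := by rw [show 2*(t/2) = t by ring]
  have hODD : HasSum o (π^2 * (B2 (t/2) - (1/4) * B2 t)) := by
    have := hOdd (t/2); rwa [hBt] at this
  set V : ℝ := π^2 * (B2 (t/2) - (1/4) * B2 t) with hV
  have key1 : ∀ n : ℕ, F ((n:ℤ) + 1) = 4 * o n := by
    intro n
    simp only [hF, ho]
    push_cast
    have hne : ((2*(n:ℝ)+1)^2) ≠ 0 := by positivity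
    rw [show ((n:ℝ) + 1 - 1/2) * (2*π*t) = 2*π*(2*n+1)*(t/2) by ring,
      show ((n:ℝ) + 1 - 1/2) = (2*n+1)/2 by ring, div_pow]
    field_simp
    norm_num
    ring
  have key2 : ∀ n : ℕ, F (-((n:ℤ) + 1)) = 4 * o (n + 1) := by
    intro n
    simp only [hF, ho]
    push_cast
    have hne : ((2*((n:ℝ)+1)+1)^2) ≠ 0 := by positivity
    rw [show ((-((n:ℝ)+1)) - 1/2) * (2*π*t) = -(2*π*(2*(n+1)+1)*(t/2)) by ring, Real.cos_neg,
      show ((-((n:ℝ)+1)) - 1/2) = -((2*(n+1)+1)/2) by ring, neg_pow, div_pow]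
    norm_num
    rw [div_eq_mul_inv]
    ring
  have hF0 : F 0 = 4 * o 0 := by
    simp only [hF, ho]
    push_cast
    rw [show ((0:ℝ) - 1/2) * (2*π*t) = -(2*π*(2*0+1)*(t/2)) by ring, Real.cos_neg]
    norm_num
  have hb1' : HasSum (fun n : ℕ => F ((n:ℤ) + 1)) (4 * V) := by
    have := hODD.mul_left 4
    convert this using 2 with n
    · rfl
    exact key1 n
  have hb1 : HasSum (fun n : ℕ => F (n:ℤ)) (4 * V + F 0) := by
    have hcast : (fun n : ℕ => F (((n + 1 : ℕ)):ℤ)) = fun n : ℕ => F ((n:ℤ)+1) := by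
      funext n; norm_num
    have h := (hasSum_nat_add_iff (f := fun n : ℕ => F (n:ℤ)) 1).1 (by rw [hcast]; exact hb1')
    rw [Finset.sum_range_one] at h
    exact h
  have hb2' : HasSum (fun n : ℕ => o (n + 1)) (V - o 0) := by
    apply (hasSum_nat_add_iff (f := o) 1).2
    rw [Finset.sum_range_one]
    rw [show V - o 0 + o 0 = V by ring]
    exact hODD
  have hb2 : HasSum (fun n : ℕ => F (-((n:ℤ) + 1))) (4 * (V - o 0)) := by
    have := hb2'.mul_left 4
    convert this using 2 with n
    · rfl
    exact key2 n
  have htot := hb1.of_nat_of_neg_add_one hb2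
  have heq : 4 * V + F 0 + 4 * (V - o 0) = 8 * V := by rw [hF0]; ring
  rwa [heq] at htot

lemma closed_form (t : ℝ) :
    8 * (π^2 * (B2 (t/2) - (1/4) * B2 t)) = (-1:ℝ)^⌊t⌋ * π^2 * (1 - 2 * Int.fract t) := by
  have hf0 := Int.fract_nonneg t
  have hf1 := Int.fract_lt_one t
  have ht : t = (⌊t⌋ : ℝ) + Int.fract t := by rw [Int.fract]; ring
  rcases Int.even_or_odd ⌊t⌋ with he | ho
  · obtain ⟨m, hm⟩ := he
    have h2 : Int.fract (t/2) = Int.fract t / 2 := by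
      have ht2 : t/2 = (m:ℝ) + Int.fract t / 2 := by
        nth_rewrite 1 [ht]; rw [hm]; push_cast; ring
      rw [ht2, Int.fract_intCast_add]
      exact Int.fract_eq_self.2 ⟨by positivity, by linarith⟩
    rw [Even.neg_one_zpow ⟨m, hm⟩]
    simp only [B2, h2]
    ring
  · obtain ⟨m, hm⟩ := ho
    have h2 : Int.fract (t/2) = (1 + Int.fract t) / 2 := by
      have ht2 : t/2 = (m:ℝ) + (1 + Int.fract t) / 2 := by
        nth_rewrite 1 [ht]; rw [hm]; push_cast; ring
      rw [ht2, Int.fract_intCast_add]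
      exact Int.fract_eq_self.2 ⟨by linarith, by linarith⟩
    rw [Odd.neg_one_zpow ⟨m, hm⟩]
    simp only [B2, h2]
    ring


lemma tau_closed (θ ρ : ℝ) (hρ : ρ = θ / (2 * π)) (p : ℤ) :
    tau θ p = (-1:ℝ)^⌊(p:ℝ)*ρ⌋ * π^2 * (1 - 2 * Int.fract ((p:ℝ)*ρ)) := by
  have hθ : θ = 2*π*ρ := by
    rw [hρ]; field_simp
  set t := (p:ℝ)*ρ with htdef
  have h := hasSum_master t
  have hfun : (fun k : ℤ => (((k:ℝ) - 1/2)^2)⁻¹ * Real.cos (((k:ℝ) - 1/2) * (2*π*t)))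
      = fun k : ℤ => (((k : ℝ) - 1 / 2) ^ 2)⁻¹ * Real.cos ((p : ℝ) * ((k : ℝ) - 1 / 2) * θ) := by
    funext k
    rw [hθ, htdef]
    ring_nf
  rw [hfun] at h
  rw [tau, h.tsum_eq]
  exact closed_form t

lemma sub_formula (a b : ℝ) (h : Int.fract b ≤ Int.fract a) :
    ⌊a - b⌋ = ⌊a⌋ - ⌊b⌋ ∧ Int.fract (a - b) = Int.fract a - Int.fract b := by
  have hb0 := Int.fract_nonneg b
  have ha1 := Int.fract_lt_one a
  have hd : a - b = ((⌊a⌋ - ⌊b⌋ : ℤ):ℝ) + (Int.fract a - Int.fract b) := by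
    rw [Int.fract, Int.fract]; push_cast; ring
  have hz : ⌊Int.fract a - Int.fract b⌋ = 0 := Int.floor_eq_zero_iff.2 ⟨by linarith, by linarith⟩
  refine ⟨?_, ?_⟩
  · rw [hd, Int.floor_intCast_add, hz, add_zero]
  · rw [hd, Int.fract_intCast_add, Int.fract_eq_self.2 ⟨by linarith, by linarith⟩]

lemma sub_formula' (a c : ℝ) (h : Int.fract a < Int.fract c) :
    ⌊a - c⌋ = ⌊a⌋ - ⌊c⌋ - 1 ∧ Int.fract (a - c) = 1 + Int.fract a - Int.fract c := by
  have ha0 := Int.fract_nonneg a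
  have hc1 := Int.fract_lt_one c
  have hd : a - c = ((⌊a⌋ - ⌊c⌋ - 1 : ℤ):ℝ) + (1 + Int.fract a - Int.fract c) := by
    rw [Int.fract, Int.fract]; push_cast; ring
  have hz : ⌊1 + Int.fract a - Int.fract c⌋ = 0 := Int.floor_eq_zero_iff.2 ⟨by linarith, by linarith⟩
  refine ⟨?_, ?_⟩
  · rw [hd, Int.floor_intCast_add, hz, add_zero]
  · rw [hd, Int.fract_intCast_add, Int.fract_eq_self.2 ⟨by linarith, by linarith⟩]

lemma neg_one_pm (n : ℤ) : (-1:ℝ)^n = 1 ∨ (-1:ℝ)^n = -1 := by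
  rcases Int.even_or_odd n with h | h
  · exact Or.inl (Even.neg_one_zpow h)
  · exact Or.inr (Odd.neg_one_zpow h)

lemma neg_one_sub (x y : ℤ) : (-1:ℝ)^(x-y) = (-1:ℝ)^x * (-1:ℝ)^y := by
  rw [zpow_sub₀ (by norm_num : (-1:ℝ) ≠ 0)]
  rcases neg_one_pm y with h | h <;> rw [h] <;> ring

lemma neg_one_sub_one (x : ℤ) : (-1:ℝ)^(x-1) = -(-1:ℝ)^x := by
  rw [zpow_sub₀ (by norm_num : (-1:ℝ) ≠ 0), zpow_one]
  ring

/-- Shift formulas for `τ_{N−ξ}` and `τ_{N−η}` when `{ξρ} ≤ {Nρ} ≤ {ηρ}`. -/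
theorem stmt_8 (θ ρ : ℝ) (hρ : ρ = θ / (2 * π)) (hirr : Irrational ρ)
    (ξ η N : ℤ) (hξ : 0 < ξ) (hη : 0 < η) (hN : 0 < N)
    (h1 : Int.fract ((ξ : ℝ) * ρ) ≤ Int.fract ((N : ℝ) * ρ))
    (h2 : Int.fract ((N : ℝ) * ρ) ≤ Int.fract ((η : ℝ) * ρ)) :
    tau θ (N - ξ) =
      (-1 : ℝ) ^ ⌊(ξ : ℝ) * ρ⌋ * tau θ N +
        2 * π ^ 2 * (-1 : ℝ) ^ (⌊(N : ℝ) * ρ⌋ - ⌊(ξ : ℝ) * ρ⌋) * Int.fract ((ξ : ℝ) * ρ) ∧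
    tau θ (N - η) =
      -((-1 : ℝ) ^ ⌊(η : ℝ) * ρ⌋) * tau θ N +
        2 * π ^ 2 * (-1 : ℝ) ^ (⌊(N : ℝ) * ρ⌋ - ⌊(η : ℝ) * ρ⌋) *
          (1 - Int.fract ((η : ℝ) * ρ)) := by
  have hcast1 : ((N - ξ : ℤ):ℝ) * ρ = (N:ℝ)*ρ - (ξ:ℝ)*ρ := by push_cast; ring
  have hcast2 : ((N - η : ℤ):ℝ) * ρ = (N:ℝ)*ρ - (η:ℝ)*ρ := by push_cast; ring
  constructor
  · have h3 := sub_formula ((N:ℝ)*ρ) ((ξ:ℝ)*ρ) h1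
    rw [tau_closed θ ρ hρ (N-ξ), tau_closed θ ρ hρ N, hcast1, h3.1, h3.2, neg_one_sub]
    ring
  · rcases eq_or_lt_of_le h2 with he | hlt
    · have h3 := sub_formula ((N:ℝ)*ρ) ((η:ℝ)*ρ) he.ge
      rw [tau_closed θ ρ hρ (N-η), tau_closed θ ρ hρ N, hcast2, h3.1, h3.2, neg_one_sub, he]
      ring
    · have h3 := sub_formula' ((N:ℝ)*ρ) ((η:ℝ)*ρ) hlt
      rw [tau_closed θ ρ hρ (N-η), tau_closed θ ρ hρ N, hcast2, h3.1, h3.2,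
        neg_one_sub_one, neg_one_sub]
      ring
end

section
/- Let θ ∈ ℝ with ρ = θ/(2π) irrational, and let ξ, η, N be positive integers with {ξρ} ≤ {Nρ} ≤ {ηρ}. Set ε = {ξρ} and ι = 1 − {ηρ}. Then (ε + ι) τ_N − (−1)^{⌊ξρ⌋} ι τ_{N−ξ} + (−1)^{⌊ηρ⌋} ε τ_{N−η} = 0. -/
open Real

theorem bern2eq : (bernoulli 2 : ℚ) = 1/6 := by
  rw [bernoulli]; norm_num [bernoulli'_two]

theorem bern2 (x : ℝ) : (Polynomial.map (algebraMap ℚ ℝ) (Polynomial.bernoulli 2)).eval x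
    = x^2 - x + 1/6 := by
  simp [Polynomial.bernoulli, Finset.sum_range_succ, Polynomial.eval_monomial, bern2eq]
  ring

theorem cosSum {x : ℝ} (hx : x ∈ Set.Icc (0:ℝ) 1) :
    HasSum (fun n : ℕ => 1 / (n : ℝ) ^ 2 * Real.cos (2 * π * n * x))
      (π ^ 2 * (x ^ 2 - x + 1 / 6)) := by
  have h := hasSum_one_div_nat_pow_mul_cos (k := 1) one_ne_zero hx
  rw [bern2] at h
  convert h using 2
  rw [Nat.factorial]
  norm_num
  ring


theorem oddSum {c : ℝ} (hc : c ∈ Set.Icc (0:ℝ) 1) :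
    HasSum (fun n : ℕ => (((n:ℝ) + 1/2) ^ 2)⁻¹ * Real.cos (2*π*(((n:ℝ) + 1/2) * c)))
      (π^2 * (1 - 2*c) / 2) := by
  obtain ⟨hc0, hc1⟩ := hc
  set f : ℕ → ℝ := fun n => 1 / (n : ℝ) ^ 2 * Real.cos (2 * π * n * (c/2)) with hf
  have hfull : HasSum f (π ^ 2 * ((c/2) ^ 2 - (c/2) + 1 / 6)) :=
    cosSum ⟨by linarith, by linarith⟩
  have heven : HasSum (fun j => f (2 * j)) ((π ^ 2 * (c ^ 2 - c + 1 / 6)) / 4) := by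
    have h := (cosSum (x := c) ⟨hc0, hc1⟩).div_const 4
    have he : (fun j => f (2 * j)) = fun j : ℕ => 1 / (j:ℝ) ^ 2 * Real.cos (2 * π * j * c) / 4 := by
      funext j
      push_cast [hf]
      rw [show 2 * π * (2 * (j:ℝ)) * (c / 2) = 2 * π * j * c by ring]
      rw [one_div, one_div, show (2*(j:ℝ))^2 = ((j:ℝ)^2)*4 by ring, mul_inv]
      ring
    rw [he]; exact h
  have hodd_summable : Summable (fun j => f (2 * j + 1)) :=
    hfull.summable.comp_injective (fun a b hab => by omega)
  have hodd : HasSum (fun j => f (2 * j + 1))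
      (π ^ 2 * ((c/2) ^ 2 - (c/2) + 1 / 6) - (π ^ 2 * (c ^ 2 - c + 1 / 6)) / 4) := by
    have h := heven.even_add_odd hodd_summable.hasSum
    have h2 := hfull.unique h
    rw [h2]
    convert hodd_summable.hasSum using 1
    ring
  have h4 := hodd.mul_left 4
  have ht : (fun n : ℕ => (((n:ℝ) + 1/2) ^ 2)⁻¹ * Real.cos (2*π*(((n:ℝ) + 1/2) * c)))
      = fun i => 4 * f (2 * i + 1) := by
    funext n
    push_cast [hf]
    have hne : ((2:ℝ) * n + 1) ≠ 0 := by positivity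
    rw [show 2 * π * (2 * (n:ℝ) + 1) * (c / 2) = 2 * π * (((n:ℝ) + 1/2) * c) by ring]
    rw [show ((n:ℝ) + 1/2) ^ 2 = (2 * (n:ℝ) + 1)^2 / 4 by ring]
    field_simp
  rw [ht]
  convert h4 using 1
  · rfl
  ring

noncomputable def T (c : ℝ) : ℝ :=
  ∑' k : ℤ, (((k : ℝ) - 1/2) ^ 2)⁻¹ * Real.cos (2*π*(((k : ℝ) - 1/2) * c))

theorem Thas {c : ℝ} (hc : c ∈ Set.Icc (0:ℝ) 1) :
    HasSum (fun k : ℤ => (((k : ℝ) - 1/2) ^ 2)⁻¹ * Real.cos (2*π*(((k : ℝ) - 1/2) * c)))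
      (π^2 * (1 - 2*c)) := by
  set F : ℤ → ℝ := fun k => (((k : ℝ) - 1/2) ^ 2)⁻¹ * Real.cos (2*π*(((k : ℝ) - 1/2) * c))
    with hF
  set g : ℕ → ℝ := fun n => (((n:ℝ) + 1/2) ^ 2)⁻¹ * Real.cos (2*π*(((n:ℝ) + 1/2) * c)) with hg
  set S : ℝ := π^2 * (1 - 2*c) / 2 with hS
  have hgS : HasSum g S := oddSum hc
  have hF0 : F 0 = g 0 := by
    simp only [hF, hg]
    push_cast
    rw [show 2*π*(((0:ℝ) - 1/2) * c) = -(2*π*(((0:ℝ) + 1/2) * c)) by ring, Real.cos_neg,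
      show ((0:ℝ) - 1/2)^2 = ((0:ℝ) + 1/2)^2 by ring]
  have hpos : HasSum (fun n : ℕ => F n) (F 0 + S) := by
    apply HasSum.zero_add
    have : (fun n : ℕ => F ((n + 1 : ℕ) : ℤ)) = g := by
      funext n
      simp only [hF, hg]
      push_cast
      rw [show ((n:ℝ) + 1 - 1/2) = ((n:ℝ) + 1/2) by ring]
    rw [this]; exact hgS
  have hneg : HasSum (fun n : ℕ => F (-(n + 1))) (S - g 0) := by
    have h1 : (fun n : ℕ => F (-(n + 1))) = fun n => g (n + 1) := by
      funext n
      simp only [hF, hg]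
      push_cast
      rw [show 2*π*((-((n:ℝ) + 1) - 1/2) * c) = -(2*π*(((n:ℝ) + 1 + 1/2) * c)) by ring,
        Real.cos_neg, show (-((n:ℝ) + 1) - 1/2)^2 = ((n:ℝ) + 1 + 1/2)^2 by ring]
    rw [h1]
    have h3 : HasSum g ((S - g 0) + ∑ i ∈ Finset.range 1, g i) := by
      simpa using hgS
    exact (hasSum_nat_add_iff 1).2 h3
  have := hpos.of_nat_of_neg_add_one hneg
  convert this using 1
  rw [hF0, hS]
  ring

theorem Tbase {c : ℝ} (hc : c ∈ Set.Icc (0:ℝ) 1) : T c = π^2 * (1 - 2*c) :=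
  (Thas hc).tsum_eq

theorem Tneg (c : ℝ) : T (-c) = T c := by
  rw [T, T]
  apply tsum_congr
  intro k
  rw [show 2*π*(((k:ℝ) - 1/2) * (-c)) = -(2*π*(((k:ℝ) - 1/2) * c)) by ring, Real.cos_neg]

theorem Tadd (c : ℝ) : T (c + 1) = - T c := by
  rw [T, T, ← tsum_neg]
  apply tsum_congr
  intro k
  rw [show 2*π*(((k:ℝ) - 1/2) * (c + 1))
      = (2*π*(((k:ℝ) - 1/2) * c) - π) + (k:ℤ) * (2*π) by push_cast; ring,
    Real.cos_add_int_mul_two_pi, Real.cos_sub, Real.cos_pi, Real.sin_pi]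
  ring

theorem Tsub (c : ℝ) : T (c - 1) = - T c := by
  rw [show c - 1 = -((-c) + 1) by ring, Tneg, Tadd, Tneg]

theorem Tzpow (n : ℤ) (c : ℝ) : T (c + n) = (-1:ℝ)^n * T c := by
  induction n using Int.induction_on with
  | zero => simp
  | succ i ih =>
    push_cast
    rw [show c + ((i:ℝ) + 1) = (c + i) + 1 by ring, Tadd]
    push_cast at ih
    rw [ih, zpow_add_one₀ (by norm_num : (-1:ℝ) ≠ 0)]
    ring
  | pred i ih =>
    push_cast
    rw [show c + (-(i:ℝ) - 1) = (c + -(i:ℝ)) - 1 by ring, Tsub]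
    push_cast at ih
    rw [ih, show (-(i:ℤ) - 1) = (-(i:ℤ)) - 1 by ring,
      zpow_sub_one₀ (by norm_num : (-1:ℝ) ≠ 0)]
    norm_num

theorem Tval (c : ℝ) : T c = (-1:ℝ)^⌊c⌋ * (π^2 * (1 - 2 * Int.fract c)) := by
  have h := Tzpow ⌊c⌋ (Int.fract c)
  rw [Int.fract_add_floor] at h
  rw [h, Tbase ⟨Int.fract_nonneg c, le_of_lt (Int.fract_lt_one c)⟩]

theorem tauT {θ ρ : ℝ} (h : θ = 2*π*ρ) (p : ℤ) : tau θ p = T ((p:ℝ) * ρ) := by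
  rw [tau, T]
  apply tsum_congr
  intro k
  rw [h, show (p:ℝ) * ((k:ℝ) - 1/2) * (2*π*ρ) = 2*π*(((k:ℝ) - 1/2) * ((p:ℝ) * ρ)) by ring]

theorem tauEval {θ ρ : ℝ} (h : ρ = θ / (2*π)) (p : ℤ) :
    tau θ p = (-1:ℝ)^⌊(p:ℝ) * ρ⌋ * (π^2 * (1 - 2 * Int.fract ((p:ℝ) * ρ))) := by
  rw [tauT (by rw [h]; field_simp : θ = 2*π*ρ), Tval]

theorem fractSub_le (x y : ℝ) (h : Int.fract y ≤ Int.fract x) :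
    Int.fract (x - y) = Int.fract x - Int.fract y ∧ ⌊x - y⌋ = ⌊x⌋ - ⌊y⌋ := by
  have hfx := Int.fract_lt_one x
  have hfy := Int.fract_nonneg y
  have hxy : x - y = (Int.fract x - Int.fract y) + ((⌊x⌋ - ⌊y⌋ : ℤ) : ℝ) := by
    rw [Int.fract, Int.fract]; push_cast; ring
  constructor
  · rw [hxy, Int.fract_add_intCast, Int.fract_eq_self.2 ⟨by linarith, by linarith⟩]
  · rw [hxy, Int.floor_add_intCast, Int.floor_eq_zero_iff.2 ⟨by linarith, by linarith⟩, zero_add]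

theorem fractSub_lt (x y : ℝ) (h : Int.fract x < Int.fract y) :
    Int.fract (x - y) = Int.fract x - Int.fract y + 1 ∧ ⌊x - y⌋ = ⌊x⌋ - ⌊y⌋ - 1 := by
  have hfx := Int.fract_nonneg x
  have hfy := Int.fract_lt_one y
  have hxy : x - y = (Int.fract x - Int.fract y + 1) + ((⌊x⌋ - ⌊y⌋ - 1 : ℤ) : ℝ) := by
    rw [Int.fract, Int.fract]; push_cast; ring
  constructor
  · rw [hxy, Int.fract_add_intCast, Int.fract_eq_self.2 ⟨by linarith, by linarith⟩]
  · rw [hxy, Int.floor_add_intCast, Int.floor_eq_zero_iff.2 ⟨by linarith, by linarith⟩, zero_add]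

theorem negOne_zpow_self (n : ℤ) : (-1:ℝ)^n * (-1:ℝ)^n = 1 := by
  rcases Int.even_or_odd n with h | h
  · rw [h.neg_one_zpow]; norm_num
  · rw [h.neg_one_zpow]; norm_num

theorem negOne_zpow_sub (m n : ℤ) : (-1:ℝ)^(m - n) = (-1:ℝ)^m * (-1:ℝ)^n := by
  rw [zpow_sub₀ (by norm_num : (-1:ℝ) ≠ 0)]
  congr 1
  rcases Int.even_or_odd n with h | h
  · rw [h.neg_one_zpow]; norm_num
  · rw [h.neg_one_zpow]; ring

/-- The orthogonality combination: `(ε + ι) τ_N − (−1)^⌊ξρ⌋ ι τ_{N−ξ} + (−1)^⌊ηρ⌋ ε τ_{N−η} = 0`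
when `{ξρ} ≤ {Nρ} ≤ {ηρ}`. -/
theorem stmt_9 (θ ρ : ℝ) (hρ : ρ = θ / (2 * π)) (hirr : Irrational ρ)
    (ξ η N : ℤ) (hξ : 0 < ξ) (hη : 0 < η) (hN : 0 < N)
    (h1 : Int.fract ((ξ : ℝ) * ρ) ≤ Int.fract ((N : ℝ) * ρ))
    (h2 : Int.fract ((N : ℝ) * ρ) ≤ Int.fract ((η : ℝ) * ρ))
    (ε ι : ℝ) (hε : ε = Int.fract ((ξ : ℝ) * ρ)) (hι : ι = 1 - Int.fract ((η : ℝ) * ρ)) :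
    (ε + ι) * tau θ N - (-1 : ℝ) ^ ⌊(ξ : ℝ) * ρ⌋ * ι * tau θ (N - ξ) +
      (-1 : ℝ) ^ ⌊(η : ℝ) * ρ⌋ * ε * tau θ (N - η) = 0 := by
  subst hε hι
  rw [tauEval hρ N, tauEval hρ (N - ξ), tauEval hρ (N - η)]
  have hNξ : ((N - ξ : ℤ) : ℝ) * ρ = (N:ℝ)*ρ - (ξ:ℝ)*ρ := by push_cast; ring
  have hNη : ((N - η : ℤ) : ℝ) * ρ = (N:ℝ)*ρ - (η:ℝ)*ρ := by push_cast; ring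
  rw [hNξ, hNη]
  obtain ⟨hf1, hfl1⟩ := fractSub_le _ _ h1
  rw [hf1, hfl1, negOne_zpow_sub]
  have hv := negOne_zpow_self ⌊(ξ:ℝ)*ρ⌋
  by_cases hNe : N = η
  · subst hNe
    rw [sub_self, Int.fract_zero, Int.floor_zero, zpow_zero]
    set a := Int.fract ((ξ:ℝ)*ρ)
    set b := Int.fract ((N:ℝ)*ρ)
    set u := (-1:ℝ)^⌊(N:ℝ)*ρ⌋
    set v := (-1:ℝ)^⌊(ξ:ℝ)*ρ⌋
    linear_combination (-(π^2*u*(1-b)*(1-2*b+2*a)))*hv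
  · have hne : Int.fract ((N:ℝ)*ρ) ≠ Int.fract ((η:ℝ)*ρ) := by
      intro heq
      have e1 := Int.fract_add_floor ((N:ℝ)*ρ)
      have e2 := Int.fract_add_floor ((η:ℝ)*ρ)
      have hirr2 : Irrational (((N - η : ℤ) : ℝ) * ρ) :=
        hirr.intCast_mul (sub_ne_zero.2 hNe)
      exact hirr2.ne_int (⌊(N:ℝ)*ρ⌋ - ⌊(η:ℝ)*ρ⌋) (by push_cast; linarith)
    have hlt : Int.fract ((N:ℝ)*ρ) < Int.fract ((η:ℝ)*ρ) := lt_of_le_of_ne h2 hne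
    obtain ⟨hf2, hfl2⟩ := fractSub_lt _ _ hlt
    rw [hf2, hfl2, show ⌊(N:ℝ)*ρ⌋ - ⌊(η:ℝ)*ρ⌋ - 1 = ⌊(N:ℝ)*ρ⌋ - (⌊(η:ℝ)*ρ⌋ + 1) by ring,
      negOne_zpow_sub, zpow_add_one₀ (by norm_num : (-1:ℝ) ≠ 0)]
    have hw := negOne_zpow_self ⌊(η:ℝ)*ρ⌋
    set a := Int.fract ((ξ:ℝ)*ρ)
    set b := Int.fract ((N:ℝ)*ρ)
    set c := Int.fract ((η:ℝ)*ρ)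
    set u := (-1:ℝ)^⌊(N:ℝ)*ρ⌋
    set v := (-1:ℝ)^⌊(ξ:ℝ)*ρ⌋
    set w := (-1:ℝ)^⌊(η:ℝ)*ρ⌋
    linear_combination (-(π^2*u*(1-c)*(1-2*b+2*a)))*hv + (-(π^2*u*a*(2*c-2*b-1)))*hw
end

section
/- Let ρ ∈ ℝ be irrational and j ≥ 1 an integer, and let ℓ = ξ_j + η_j. If ε_j > ι_j, then ξ_ℓ = ℓ, η_ℓ = η_j, ε_ℓ = ε_j − ι_j and ι_ℓ = ι_j; if ε_j < ι_j, then η_ℓ = ℓ, ξ_ℓ = ξ_j, ι_ℓ = ι_j − ε_j and ε_ℓ = ε_j. In other words, each new one-sided best-approximation index is the sum of the two previous ones. -/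
lemma aux_fract_add (a b : ℝ) :
    Int.fract (a + b) = Int.fract a + Int.fract b ∨
    Int.fract (a + b) = Int.fract a + Int.fract b - 1 := by
  obtain ⟨z, hz⟩ := Int.fract_add a b
  have h1 : (z : ℝ) < 1 := by
    have := Int.fract_lt_one (a + b)
    have := Int.fract_nonneg a
    have := Int.fract_nonneg b
    linarith
  have h2 : (-2 : ℝ) < z := by
    have := Int.fract_nonneg (a + b)
    have := Int.fract_lt_one a
    have := Int.fract_lt_one b
    linarith
  have h1' : z < 1 := by exact_mod_cast h1
  have h2' : (-2 : ℤ) < z := by exact_mod_cast h2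
  interval_cases z
  · right
    have : ((-1 : ℤ) : ℝ) = -1 := by norm_num
    rw [this] at hz
    linarith
  · left
    have : ((0 : ℤ) : ℝ) = 0 := by norm_num
    rw [this] at hz
    linarith

lemma aux_inj (ρ : ℝ) (hρ : Irrational ρ) (m n : ℕ)
    (h : Int.fract ((m : ℝ) * ρ) = Int.fract ((n : ℝ) * ρ)) : m = n := by
  by_contra hne
  obtain ⟨z, hz⟩ := Int.fract_eq_fract.1 h
  have hmn : ((m : ℤ) - n) ≠ 0 := by
    intro h0
    exact hne (by omega)
  have hirr : Irrational ((((m : ℤ) - (n : ℤ) : ℤ) : ℝ) * ρ) := hρ.intCast_mul hmn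
  apply hirr.ne_int z
  push_cast
  linarith

lemma aux_pos (ρ : ℝ) (hρ : Irrational ρ) (m : ℕ) (hm : 1 ≤ m) :
    0 < Int.fract ((m : ℝ) * ρ) := by
  rcases (Int.fract_nonneg ((m : ℝ) * ρ)).lt_or_eq with h | h
  · exact h
  · exfalso
    have hirr : Irrational ((m : ℝ) * ρ) := hρ.natCast_mul (by omega)
    apply hirr.ne_int ⌊(m : ℝ) * ρ⌋
    have := Int.fract_add_floor ((m : ℝ) * ρ)
    rw [← h] at this
    linarith

/-- Each new one-sided best-approximation index is the sum of the two previous ones: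
if `ξ_j`, `η_j` are the minimizers over `{1,…,j}` of `{pρ}` and `1 − {pρ}` respectively,
`ε_j = {ξ_j ρ}`, `ι_j = 1 - {η_j ρ}`, and `ℓ = ξ_j + η_j`, then for `ε_j > ι_j` one has
`ξ_ℓ = ℓ`, `η_ℓ = η_j`, `ε_ℓ = ε_j − ι_j`, `ι_ℓ = ι_j`, and for `ε_j < ι_j` one has
`η_ℓ = ℓ`, `ξ_ℓ = ξ_j`, `ι_ℓ = ι_j − ε_j`, `ε_ℓ = ε_j`. -/
theorem stmt_12 (ρ : ℝ) (hρ : Irrational ρ) (j : ℕ) (hj : 1 ≤ j)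
    (ξj ηj : ℕ)
    (hξjmem : ξj ∈ Finset.Icc 1 j)
    (hξjmin : ∀ p ∈ Finset.Icc 1 j, Int.fract ((ξj : ℝ) * ρ) ≤ Int.fract ((p : ℝ) * ρ))
    (hηjmem : ηj ∈ Finset.Icc 1 j)
    (hηjmin : ∀ p ∈ Finset.Icc 1 j,
      1 - Int.fract ((ηj : ℝ) * ρ) ≤ 1 - Int.fract ((p : ℝ) * ρ))
    (ℓ : ℕ) (hℓ : ℓ = ξj + ηj)
    (ξℓ ηℓ : ℕ)
    (hξℓmem : ξℓ ∈ Finset.Icc 1 ℓ)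
    (hξℓmin : ∀ p ∈ Finset.Icc 1 ℓ, Int.fract ((ξℓ : ℝ) * ρ) ≤ Int.fract ((p : ℝ) * ρ))
    (hηℓmem : ηℓ ∈ Finset.Icc 1 ℓ)
    (hηℓmin : ∀ p ∈ Finset.Icc 1 ℓ,
      1 - Int.fract ((ηℓ : ℝ) * ρ) ≤ 1 - Int.fract ((p : ℝ) * ρ))
    (εj ιj εℓ ιℓ : ℝ)
    (hεj : εj = Int.fract ((ξj : ℝ) * ρ)) (hιj : ιj = 1 - Int.fract ((ηj : ℝ) * ρ))
    (hεℓ : εℓ = Int.fract ((ξℓ : ℝ) * ρ)) (hιℓ : ιℓ = 1 - Int.fract ((ηℓ : ℝ) * ρ)) :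
    (ιj < εj → ξℓ = ℓ ∧ ηℓ = ηj ∧ εℓ = εj - ιj ∧ ιℓ = ιj) ∧
    (εj < ιj → ηℓ = ℓ ∧ ξℓ = ξj ∧ ιℓ = ιj - εj ∧ εℓ = εj) := by
  simp only [Finset.mem_Icc] at hξjmem hηjmem hξℓmem hηℓmem
  obtain ⟨hξj1, hξj2⟩ := hξjmem
  obtain ⟨hηj1, hηj2⟩ := hηjmem
  obtain ⟨hξℓ1, hξℓ2⟩ := hξℓmem
  obtain ⟨hηℓ1, hηℓ2⟩ := hηℓmem
  have hℓ1 : 1 ≤ ℓ := by omega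
  have memj : ∀ p : ℕ, 1 ≤ p → p ≤ j → p ∈ Finset.Icc 1 j :=
    fun p h1 h2 => Finset.mem_Icc.2 ⟨h1, h2⟩
  have hsplit : ((ℓ : ℝ) * ρ) = (ξj : ℝ) * ρ + (ηj : ℝ) * ρ := by
    rw [hℓ]; push_cast; ring
  have hεpos : 0 < εj := hεj ▸ aux_pos ρ hρ ξj hξj1
  have hιpos : 0 < ιj := by
    rw [hιj]; have := Int.fract_lt_one ((ηj : ℝ) * ρ); linarith
  have hε1 : εj < 1 := by rw [hεj]; exact Int.fract_lt_one _
  have hι1 : ιj < 1 := by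
    rw [hιj]; have := aux_pos ρ hρ ηj hηj1; linarith
  have hFη : Int.fract ((ηj : ℝ) * ρ) = 1 - ιj := by rw [hιj]; ring
  constructor
  · intro h
    have hFℓ : Int.fract ((ℓ : ℝ) * ρ) = εj - ιj := by
      rw [hsplit]
      rcases aux_fract_add ((ξj : ℝ) * ρ) ((ηj : ℝ) * ρ) with hc | hc
      · exfalso
        have h1 := Int.fract_lt_one ((ξj : ℝ) * ρ + (ηj : ℝ) * ρ)
        rw [hc, ← hεj, hFη] at h1
        linarith
      · rw [hc, ← hεj, hFη]; ring
    have claimA : ∀ p : ℕ, 1 ≤ p → p ≤ ℓ → p ≠ ℓ → εj - ιj < Int.fract ((p : ℝ) * ρ) := by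
      intro p hp1 hp2 hpne
      rcases le_or_gt p j with hpj | hpj
      · have h1 := hξjmin p (memj p hp1 hpj)
        rw [← hεj] at h1
        linarith
      · set q := p - ηj with hq
        have hq1 : 1 ≤ q := by omega
        have hqj : q ≤ j := by omega
        have hqne : q ≠ ξj := by omega
        have hdec : (p : ℝ) * ρ = (q : ℝ) * ρ + (ηj : ℝ) * ρ := by
          have hpq : p = q + ηj := by omega
          rw [hpq]; push_cast; ring
        have hFq : εj < Int.fract ((q : ℝ) * ρ) := by
          have h1 := hξjmin q (memj q hq1 hqj)
          rw [← hεj] at h1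
          rcases h1.lt_or_eq with h2 | h2
          · exact h2
          · exact absurd (aux_inj ρ hρ ξj q (by rw [← hεj]; exact h2)) (Ne.symm hqne)
        rcases aux_fract_add ((q : ℝ) * ρ) ((ηj : ℝ) * ρ) with hc | hc <;>
          rw [hdec, hc, hFη] <;> linarith
    have hξℓeq : ξℓ = ℓ := by
      by_contra hne
      have h1 := hξℓmin ℓ (Finset.mem_Icc.2 ⟨hℓ1, le_refl ℓ⟩)
      have h2 := claimA ξℓ hξℓ1 hξℓ2 hne
      rw [hFℓ] at h1
      linarith
    have hεℓeq : εℓ = εj - ιj := by rw [hεℓ, hξℓeq, hFℓ]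
    have claimB : ∀ p : ℕ, 1 ≤ p → p ≤ ℓ → Int.fract ((p : ℝ) * ρ) ≤ 1 - ιj := by
      intro p hp1 hp2
      rcases le_or_gt p j with hpj | hpj
      · have h1 := hηjmin p (memj p hp1 hpj)
        linarith [hFη]
      · set q := p - ηj with hq
        have hq1 : 1 ≤ q := by omega
        have hqj : q ≤ j := by omega
        have hdec : (p : ℝ) * ρ = (q : ℝ) * ρ + (ηj : ℝ) * ρ := by
          have hpq : p = q + ηj := by omega
          rw [hpq]; push_cast; ring
        have hFqlo := hξjmin q (memj q hq1 hqj)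
        rw [← hεj] at hFqlo
        have hFq1 := Int.fract_lt_one ((q : ℝ) * ρ)
        have hFp1 := Int.fract_lt_one ((p : ℝ) * ρ)
        rcases aux_fract_add ((q : ℝ) * ρ) ((ηj : ℝ) * ρ) with hc | hc
        · exfalso
          rw [hdec, hc, hFη] at hFp1
          linarith
        · rw [hdec, hc, hFη]
          linarith
    have hηℓeq : ηℓ = ηj := by
      have h1 := hηℓmin ηj (Finset.mem_Icc.2 ⟨hηj1, by omega⟩)
      have h2 := claimB ηℓ hηℓ1 hηℓ2
      refine aux_inj ρ hρ ηℓ ηj (le_antisymm ?_ ?_)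
      · rw [hFη]; exact h2
      · linarith
    have hιℓeq : ιℓ = ιj := by rw [hιℓ, hηℓeq, ← hιj]
    exact ⟨hξℓeq, hηℓeq, hεℓeq, hιℓeq⟩
  · intro h
    have hFℓ : Int.fract ((ℓ : ℝ) * ρ) = 1 - (ιj - εj) := by
      rw [hsplit]
      rcases aux_fract_add ((ξj : ℝ) * ρ) ((ηj : ℝ) * ρ) with hc | hc
      · rw [hc, ← hεj, hFη]; ring
      · exfalso
        have h1 := Int.fract_nonneg ((ξj : ℝ) * ρ + (ηj : ℝ) * ρ)
        rw [hc, ← hεj, hFη] at h1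
        linarith
    have claimC : ∀ p : ℕ, 1 ≤ p → p ≤ ℓ → p ≠ ℓ →
        Int.fract ((p : ℝ) * ρ) < 1 - (ιj - εj) := by
      intro p hp1 hp2 hpne
      rcases le_or_gt p j with hpj | hpj
      · have h1 := hηjmin p (memj p hp1 hpj)
        linarith [hFη]
      · set q := p - ξj with hq
        have hq1 : 1 ≤ q := by omega
        have hqj : q ≤ j := by omega
        have hqne : q ≠ ηj := by omega
        have hdec : (p : ℝ) * ρ = (q : ℝ) * ρ + (ξj : ℝ) * ρ := by
          have hpq : p = q + ξj := by omega
          rw [hpq]; push_cast; ring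
        have hFq : Int.fract ((q : ℝ) * ρ) < 1 - ιj := by
          have h1 := hηjmin q (memj q hq1 hqj)
          have h2 : Int.fract ((q : ℝ) * ρ) ≤ Int.fract ((ηj : ℝ) * ρ) := by linarith
          rcases h2.lt_or_eq with h3 | h3
          · linarith [hFη]
          · exact absurd (aux_inj ρ hρ q ηj h3) hqne
        rcases aux_fract_add ((q : ℝ) * ρ) ((ξj : ℝ) * ρ) with hc | hc <;>
          rw [hdec, hc, ← hεj] <;> linarith
    have hηℓeq : ηℓ = ℓ := by
      by_contra hne
      have h1 := hηℓmin ℓ (Finset.mem_Icc.2 ⟨hℓ1, le_refl ℓ⟩)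
      have h2 := claimC ηℓ hηℓ1 hηℓ2 hne
      rw [hFℓ] at h1
      linarith
    have hιℓeq : ιℓ = ιj - εj := by rw [hιℓ, hηℓeq, hFℓ]; ring
    have claimD : ∀ p : ℕ, 1 ≤ p → p ≤ ℓ → p ≠ ξj → εj < Int.fract ((p : ℝ) * ρ) := by
      intro p hp1 hp2 hpne
      rcases le_or_gt p j with hpj | hpj
      · have h1 := hξjmin p (memj p hp1 hpj)
        rw [← hεj] at h1
        rcases h1.lt_or_eq with h2 | h2
        · exact h2
        · exact absurd (aux_inj ρ hρ ξj p (by rw [← hεj]; exact h2)) (Ne.symm hpne)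
      · set q := p - ξj with hq
        have hq1 : 1 ≤ q := by omega
        have hqj : q ≤ j := by omega
        have hdec : (p : ℝ) * ρ = (q : ℝ) * ρ + (ξj : ℝ) * ρ := by
          have hpq : p = q + ξj := by omega
          rw [hpq]; push_cast; ring
        have hFqpos := aux_pos ρ hρ q hq1
        have hFqhi : Int.fract ((q : ℝ) * ρ) ≤ 1 - ιj := by
          have h1 := hηjmin q (memj q hq1 hqj)
          linarith [hFη]
        have hFp0 := Int.fract_nonneg ((p : ℝ) * ρ)
        rcases aux_fract_add ((q : ℝ) * ρ) ((ξj : ℝ) * ρ) with hc | hc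
        · rw [hdec, hc, ← hεj]; linarith
        · exfalso
          rw [hdec, hc, ← hεj] at hFp0
          linarith
    have hξℓeq : ξℓ = ξj := by
      by_contra hne
      have h1 := hξℓmin ξj (Finset.mem_Icc.2 ⟨hξj1, by omega⟩)
      rw [← hεj] at h1
      have h2 := claimD ξℓ hξℓ1 hξℓ2 hne
      linarith
    have hεℓeq : εℓ = εj := by rw [hεℓ, hξℓeq, ← hεj]
    exact ⟨hηℓeq, hξℓeq, hιℓeq, hεℓeq⟩
end

section
/- Let I ⊆ ℝ be an infinite set and φ₁, φ₂ : I → ℝ with φ₁(x) ≠ φ₂(x) for all x ∈ I. Suppose the divided differences of x² and x³, namely φ₁(x) + φ₂(x) and φ₁(x)² + φ₁(x)φ₂(x) + φ₂(x)², agree on I with real polynomials in x of degrees at most 1 and 2 respectively. Then there exist reals B, C, D, E, F such that for every x ∈ I and for i = 1, 2: φ_i(x)² + 2B x φ_i(x) + C x² + 2D φ_i(x) + 2E x + F = 0; i.e., φ₁(x) and φ₂(x) are the two roots in y of a fixed quadratic A y² + 2B x y + C x² + 2D y + 2E x + F = 0 with A = 1. -/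
open Polynomial

/-- If the divided differences of `x²` and `x³` (i.e. `φ₁ + φ₂` and
`φ₁² + φ₁φ₂ + φ₂²`) are polynomials of degrees at most 1 and 2 on an infinite set `I`,
then `φ₁(x)` and `φ₂(x)` are the two roots in `y` of a fixed quadratic
`y² + 2Bxy + Cx² + 2Dy + 2Ex + F = 0`. -/
theorem stmt_13 (I : Set ℝ) (hI : I.Infinite) (φ₁ φ₂ : ℝ → ℝ)
    (hne : ∀ x ∈ I, φ₁ x ≠ φ₂ x)
    (P₁ P₂ : ℝ[X]) (hP₁deg : P₁.degree ≤ 1) (hP₂deg : P₂.degree ≤ 2)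
    (hP₁ : ∀ x ∈ I, φ₁ x + φ₂ x = P₁.eval x)
    (hP₂ : ∀ x ∈ I, (φ₁ x) ^ 2 + φ₁ x * φ₂ x + (φ₂ x) ^ 2 = P₂.eval x) :
    ∃ B C D E F : ℝ, ∀ x ∈ I,
      (φ₁ x) ^ 2 + 2 * B * x * φ₁ x + C * x ^ 2 + 2 * D * φ₁ x + 2 * E * x + F = 0 ∧
      (φ₂ x) ^ 2 + 2 * B * x * φ₂ x + C * x ^ 2 + 2 * D * φ₂ x + 2 * E * x + F = 0 := by
  have h1n : P₁.natDegree < 2 := by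
    have h := Polynomial.natDegree_le_of_degree_le (n := 1) (by exact_mod_cast hP₁deg)
    omega
  have h2n : P₂.natDegree < 3 := by
    have h := Polynomial.natDegree_le_of_degree_le (n := 2) (by exact_mod_cast hP₂deg)
    omega
  set a := P₁.coeff 1 with ha
  set b := P₁.coeff 0 with hb
  set c := P₂.coeff 2 with hc
  set d := P₂.coeff 1 with hd
  set e := P₂.coeff 0 with he
  refine ⟨-a / 2, a ^ 2 - c, -b / 2, (2 * a * b - d) / 2, b ^ 2 - e, ?_⟩
  intro x hx
  have e1 : P₁.eval x = b + a * x := by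
    rw [Polynomial.eval_eq_sum_range' h1n]
    simp [Finset.sum_range_succ]
    rfl
  have e2 : P₂.eval x = e + d * x + c * x ^ 2 := by
    rw [Polynomial.eval_eq_sum_range' h2n]
    simp [Finset.sum_range_succ]
    rfl
  have h1 := hP₁ x hx
  have h2 := hP₂ x hx
  rw [e1] at h1
  rw [e2] at h2
  constructor
  · linear_combination (-(φ₂ x) - (b + a * x)) * h1 + h2
  · linear_combination (-(φ₁ x) - (b + a * x)) * h1 + h2
end

section
/- Let I ⊆ ℝ and φ₁, φ₂ : I → ℝ be such that φ₁ + φ₂ agrees on I with a real polynomial of degree at most 1 and φ₁ φ₂ agrees on I with a real polynomial of degree at most 2. Then for every real polynomial f of degree n ≥ 1 there exists a real polynomial g of degree at most n − 1 such that for all x ∈ I with φ₁(x) ≠ φ₂(x): (f(φ₂(x)) − f(φ₁(x)))/(φ₂(x) − φ₁(x)) = g(x). -/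
open Polynomial

/-- Recursively defined "divided difference" polynomials. -/
noncomputable def ddAux (P Q : ℝ[X]) : ℕ → ℝ[X]
  | 0 => 0
  | 1 => 1
  | (k+2) => P * ddAux P Q (k+1) - Q * ddAux P Q k

lemma ddAux_zero (P Q : ℝ[X]) : ddAux P Q 0 = 0 := by rw [ddAux]
lemma ddAux_one (P Q : ℝ[X]) : ddAux P Q 1 = 1 := by rw [ddAux]
lemma ddAux_add_two (P Q : ℝ[X]) (k : ℕ) :
    ddAux P Q (k+2) = P * ddAux P Q (k+1) - Q * ddAux P Q k := by rw [ddAux]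

lemma ddAux_degree (P Q : ℝ[X]) (hP : P.degree ≤ 1) (hQ : Q.degree ≤ 2) :
    ∀ k : ℕ, (ddAux P Q (k+1)).degree ≤ (k : ℕ) := by
  intro k
  induction k using Nat.twoStepInduction with
  | zero => simp [ddAux_one]
  | one => simpa [ddAux_add_two, ddAux_one, ddAux_zero] using hP
  | more k ih1 ih2 =>
    show (ddAux P Q (k+1+2)).degree ≤ ((k+2 : ℕ) : WithBot ℕ)
    rw [ddAux_add_two]
    refine le_trans (degree_sub_le _ _) (max_le ?_ ?_)
    · refine le_trans (degree_mul_le _ _) (le_trans (add_le_add hP ih2) ?_)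
      norm_cast; omega
    · refine le_trans (degree_mul_le _ _) (le_trans (add_le_add hQ ih1) ?_)
      norm_cast; omega

lemma ddAux_eval (P Q : ℝ[X]) (a b x : ℝ) (h1 : a + b = P.eval x) (h2 : a * b = Q.eval x) :
    ∀ k : ℕ, b ^ k - a ^ k = (b - a) * (ddAux P Q k).eval x := by
  intro k
  induction k using Nat.twoStepInduction with
  | zero => simp [ddAux_zero]
  | one => simp [ddAux_one]
  | more k ih1 ih2 =>
    show b ^ (k+2) - a ^ (k+2) = (b - a) * (ddAux P Q (k+2)).eval x
    rw [ddAux_add_two]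
    simp only [eval_sub, eval_mul, ← h1, ← h2]
    linear_combination (a + b) * ih2 - a * b * ih1

/-- If `φ₁ + φ₂` is a polynomial of degree at most 1 and `φ₁φ₂` a polynomial of degree
at most 2 on `I`, then the divided difference of any polynomial of degree `n ≥ 1` is a
polynomial of degree at most `n − 1` on `I`. -/
theorem stmt_14 (I : Set ℝ) (φ₁ φ₂ : ℝ → ℝ)
    (P₁ P₂ : ℝ[X]) (hP₁deg : P₁.degree ≤ 1) (hP₂deg : P₂.degree ≤ 2)
    (hP₁ : ∀ x ∈ I, φ₁ x + φ₂ x = P₁.eval x)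
    (hP₂ : ∀ x ∈ I, φ₁ x * φ₂ x = P₂.eval x) :
    ∀ n : ℕ, 1 ≤ n → ∀ f : ℝ[X], f.natDegree = n →
      ∃ g : ℝ[X], g.degree ≤ (n - 1 : ℕ) ∧
        ∀ x ∈ I, φ₁ x ≠ φ₂ x →
          (f.eval (φ₂ x) - f.eval (φ₁ x)) / (φ₂ x - φ₁ x) = g.eval x := by
  intro n hn f hf
  refine ⟨∑ k ∈ Finset.range (n+1), C (f.coeff k) * ddAux P₁ P₂ k, ?_, ?_⟩
  · refine le_trans (degree_sum_le _ _) (Finset.sup_le ?_)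
    intro k hk
    match k with
    | 0 => simp [ddAux_zero]
    | (j+1) =>
      refine le_trans (degree_mul_le _ _)
        (le_trans (add_le_add degree_C_le (ddAux_degree P₁ P₂ hP₁deg hP₂deg j)) ?_)
      rw [zero_add]
      have hj : j ≤ n - 1 := by
        have := Finset.mem_range.mp hk; omega
      exact_mod_cast hj
  · intro x hx hne
    have hd : φ₂ x - φ₁ x ≠ 0 := sub_ne_zero.mpr (Ne.symm hne)
    rw [div_eq_iff hd]
    have key := ddAux_eval P₁ P₂ (φ₁ x) (φ₂ x) x (hP₁ x hx) (hP₂ x hx)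
    rw [eval_eq_sum_range (x := φ₂ x), eval_eq_sum_range (x := φ₁ x), hf,
      ← Finset.sum_sub_distrib, eval_finset_sum, Finset.sum_mul]
    refine Finset.sum_congr rfl fun k _ => ?_
    rw [eval_mul, eval_C, ← mul_sub, key k]
    ring
end

section
/- Let A, B, C, D, E, F ∈ ℂ with A ≠ 0, C ≠ 0 and B² − AC ≠ 0. Set x_c = (AE − BD)/(B² − AC), y_c = (CD − BE)/(B² − AC) and F̃ = F + D y_c + E x_c. Choose a, c, ζ, Q ∈ ℂ with a² = A, c² = C, ζ² = F̃/(4(B² − AC)), Q ≠ 0 and Q + Q^{−1} = −2B/(ac). Then for every t ∈ ℂ with t ≠ 0, both points (x, y) and (x, y′), where x = x_c + ζ a (t + t^{−1}), y = y_c + ζ c (t Q^{−1} + Q t^{−1}), y′ = y_c + ζ c (t Q + (tQ)^{−1}), lie on the conic A y² + 2B x y + C x² + 2D y + 2E x + F = 0. -/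
set_option maxHeartbeats 1000000

/-- Verification of the parametrization of the conic
`Ay² + 2Bxy + Cx² + 2Dy + 2Ex + F = 0` (central non-degenerate case): with
`x = x_c + ζa(t + t⁻¹)`, `y = y_c + ζc(tQ⁻¹ + Qt⁻¹)`, `y′ = y_c + ζc(tQ + (tQ)⁻¹)`,
both `(x, y)` and `(x, y′)` lie on the conic. -/
theorem stmt_15 (A B C D E F : ℂ) (hA : A ≠ 0) (hC : C ≠ 0) (hBAC : B ^ 2 - A * C ≠ 0)
    (xc yc Ft : ℂ)
    (hxc : xc = (A * E - B * D) / (B ^ 2 - A * C))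
    (hyc : yc = (C * D - B * E) / (B ^ 2 - A * C))
    (hFt : Ft = F + D * yc + E * xc)
    (a c ζ Q : ℂ) (ha : a ^ 2 = A) (hc : c ^ 2 = C)
    (hζ : ζ ^ 2 = Ft / (4 * (B ^ 2 - A * C)))
    (hQ : Q ≠ 0) (hQQ : Q + Q⁻¹ = -2 * B / (a * c)) :
    ∀ t : ℂ, t ≠ 0 →
      ∀ x y y' : ℂ,
        x = xc + ζ * a * (t + t⁻¹) →
        y = yc + ζ * c * (t * Q⁻¹ + Q * t⁻¹) →
        y' = yc + ζ * c * (t * Q + (t * Q)⁻¹) →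
        A * y ^ 2 + 2 * B * x * y + C * x ^ 2 + 2 * D * y + 2 * E * x + F = 0 ∧
        A * y' ^ 2 + 2 * B * x * y' + C * x ^ 2 + 2 * D * y' + 2 * E * x + F = 0 := by
  intro t ht x y y' hx hy hy'
  have ha0 : a ≠ 0 := by rintro rfl; simp at ha; exact hA ha.symm
  have hc0 : c ≠ 0 := by rintro rfl; simp at hc; exact hC hc.symm
  have hB : B = -(Q + Q⁻¹) * (a * c) / 2 := by
    rw [hQQ]; field_simp
  have h4 : (4 : ℂ) * (B ^ 2 - A * C) ≠ 0 := by
    simpa using hBAC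
  have hF : F = 4 * (B ^ 2 - A * C) * ζ ^ 2 - D * yc - E * xc := by
    have h2 : Ft = 4 * (B ^ 2 - A * C) * ζ ^ 2 := by
      rw [hζ]; field_simp
    rw [h2] at hFt; linear_combination -hFt
  have h1 : A * yc + B * xc + D = 0 := by
    rw [hxc, hyc]; field_simp; ring
  have h2 : B * yc + C * xc + E = 0 := by
    rw [hxc, hyc]; simp only [mul_div_assoc']; rw [← add_div, div_add' _ _ _ hBAC, div_eq_zero_iff]; left; ring
  have hquad : A * (ζ * c * (t * Q⁻¹ + Q * t⁻¹)) ^ 2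
      + 2 * B * (ζ * a * (t + t⁻¹)) * (ζ * c * (t * Q⁻¹ + Q * t⁻¹))
      + C * (ζ * a * (t + t⁻¹)) ^ 2 = -(4 * (B ^ 2 - A * C) * ζ ^ 2) := by
    have hh : t⁻¹ ^ 4 * Q⁻¹ ^ 4 * (t ^ 4 * Q ^ 4) = 1 := by
      field_simp
    rw [← ha, ← hc, hB]
    field_simp
    ring
  have hquad' : A * (ζ * c * (t * Q + (t * Q)⁻¹)) ^ 2
      + 2 * B * (ζ * a * (t + t⁻¹)) * (ζ * c * (t * Q + (t * Q)⁻¹))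
      + C * (ζ * a * (t + t⁻¹)) ^ 2 = -(4 * (B ^ 2 - A * C) * ζ ^ 2) := by
    have hh : t⁻¹ ^ 4 * Q⁻¹ ^ 4 * (t ^ 4 * Q ^ 4) = 1 := by
      field_simp
    rw [← ha, ← hc, hB]
    field_simp
    ring
  subst hx hy hy'
  constructor
  · linear_combination (2 * (ζ * c * (t * Q⁻¹ + Q * t⁻¹)) + yc) * h1
      + (2 * (ζ * a * (t + t⁻¹)) + xc) * h2 + hquad + hF
  · linear_combination (2 * (ζ * c * (t * Q + (t * Q)⁻¹)) + yc) * h1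
      + (2 * (ζ * a * (t + t⁻¹)) + xc) * h2 + hquad' + hF
end

section
/- Let θ ∈ ℝ with θ/π irrational. Then there do not exist real polynomials P and Q in two variables such that for every integer k ≥ 1 one has Q(cos kθ, cos((k − 1/2)θ)) ≠ 0 and P(cos kθ, cos((k − 1/2)θ)) / Q(cos kθ, cos((k − 1/2)θ)) = ((k − 1/2)/(k + 1/2))². Consequently, the discrete measure with mass (k − 1/2)^{−2} at cos((k − 1/2)θ) is not semi-classical: the mass ratio μ(y_{k+1})/μ(y_k) = ((k − 1/2)/(k + 1/2))² is not a rational function of the lattice points x_k = cos kθ and y_k = cos((k − 1/2)θ). -/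
open Real Filter

private lemma lemA (θ : ℝ) (hθ : Irrational (θ / π)) {ε : ℝ} (hε : 0 < ε) :
    ∃ p : ℕ, 1 ≤ p ∧ ∃ q : ℤ, 0 < |(p : ℝ) * θ - 2 * π * q| ∧ |(p : ℝ) * θ - 2 * π * q| < ε := by
  have hπ : (0 : ℝ) < π := Real.pi_pos
  rcases AddSubgroup.dense_or_cyclic (AddSubgroup.closure ({θ, 2 * π} : Set ℝ)) with hd | ⟨a, ha⟩
  · have hne : (Set.Ioo (0 : ℝ) (min ε (2 * π))).Nonempty :=
      Set.nonempty_Ioo.2 (lt_min hε (by linarith))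
    obtain ⟨g, hgS, hg0, hgε⟩ := hd.exists_mem_open isOpen_Ioo hne
    rw [SetLike.mem_coe, AddSubgroup.mem_closure_pair] at hgS
    obtain ⟨m, n, hmn⟩ := hgS
    simp only [zsmul_eq_mul] at hmn
    have hgε' : g < ε := lt_of_lt_of_le hgε (min_le_left _ _)
    have hg2π : g < 2 * π := lt_of_lt_of_le hgε (min_le_right _ _)
    have hm0 : m ≠ 0 := by
      rintro rfl
      simp only [Int.cast_zero, zero_mul, zero_add] at hmn
      have hn0 : 0 < (n : ℝ) := by
        by_contra h
        push_neg at h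
        nlinarith
      have hn1 : (1 : ℝ) ≤ (n : ℝ) := by exact_mod_cast (by exact_mod_cast hn0 : (0:ℤ) < n)
      nlinarith
    refine ⟨m.natAbs, Int.natAbs_pos.mpr hm0, ?_⟩
    rcases hm0.lt_or_gt with hmneg | hmpos
    · have hcast : ((m.natAbs : ℝ)) = -(m : ℝ) := by
        rw [Nat.cast_natAbs]; exact_mod_cast abs_of_neg hmneg
      refine ⟨n, ?_, ?_⟩
      · have h1 : (m.natAbs : ℝ) * θ - 2 * π * n = -g := by
          rw [hcast]; linear_combination -hmn
        rw [h1, abs_neg, abs_of_pos hg0]; exact hg0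
      · have h1 : (m.natAbs : ℝ) * θ - 2 * π * n = -g := by
          rw [hcast]; linear_combination -hmn
        rw [h1, abs_neg, abs_of_pos hg0]; exact hgε'
    · have hcast : ((m.natAbs : ℝ)) = (m : ℝ) := by
        rw [Nat.cast_natAbs]; exact_mod_cast abs_of_pos hmpos
      refine ⟨-n, ?_, ?_⟩
      · have h1 : (m.natAbs : ℝ) * θ - 2 * π * (-n : ℤ) = g := by
          rw [hcast]; push_cast; linear_combination hmn
        rw [h1, abs_of_pos hg0]; exact hg0
      · have h1 : (m.natAbs : ℝ) * θ - 2 * π * (-n : ℤ) = g := by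
          rw [hcast]; push_cast; linear_combination hmn
        rw [h1, abs_of_pos hg0]; exact hgε'
  · exfalso
    have hθS : θ ∈ AddSubgroup.closure ({θ, 2 * π} : Set ℝ) :=
      AddSubgroup.subset_closure (by simp)
    have h2πS : 2 * π ∈ AddSubgroup.closure ({θ, 2 * π} : Set ℝ) :=
      AddSubgroup.subset_closure (by simp)
    rw [ha, AddSubgroup.mem_closure_singleton] at hθS h2πS
    obtain ⟨m, hm⟩ := hθS
    obtain ⟨n, hn⟩ := h2πS
    simp only [zsmul_eq_mul] at hm hn
    have hn0 : (n : ℝ) ≠ 0 := by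
      rintro h
      rw [h, zero_mul] at hn
      linarith
    have ha0 : a ≠ 0 := by
      rintro rfl
      simp only [mul_zero] at hn
      linarith
    have hkey : θ / π = (2 * m : ℝ) / n := by
      have hπa : π = n * a / 2 := by linarith
      rw [← hm, hπa]
      field_simp
    rw [hkey] at hθ
    exact hθ ⟨(2 * m : ℚ) / n, by push_cast; ring⟩

private lemma lemB (θ : ℝ) (hθ : Irrational (θ / π)) {ε : ℝ} (hε : 0 < ε) (K : ℕ) :
    ∃ k : ℕ, K ≤ k ∧ 1 ≤ k ∧ ∃ M : ℤ, |(k : ℝ) * θ - θ - 2 * π * M| < ε := by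
  have hπ : (0 : ℝ) < π := Real.pi_pos
  obtain ⟨p, hp1, q, hs0, hsε⟩ := lemA θ hθ (lt_min hε one_pos)
  set s : ℝ := (p : ℝ) * θ - 2 * π * q with hs
  set c : ℝ := |s| with hc
  have hc0 : 0 < c := hs0
  have hcε : c < ε := lt_of_lt_of_le hsε (min_le_left _ _)
  have hc1 : c < 1 := lt_of_lt_of_le hsε (min_le_right _ _)
  set L : ℕ := K + 1 with hL
  set j : ℕ := ⌈(2 * π * L) / c⌉₊ with hj
  have hLpos : (0 : ℝ) < L := by positivity
  have hT0 : (0 : ℝ) ≤ 2 * π * L / c := by positivity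
  have hjc_ge : 2 * π * L ≤ (j : ℝ) * c := by
    have h := Nat.le_ceil ((2 * π * L) / c)
    rw [div_le_iff₀ hc0] at h
    exact h
  have hjc_lt : (j : ℝ) * c < 2 * π * L + c := by
    have h := Nat.ceil_lt_add_one hT0
    have := (mul_lt_mul_of_pos_right h hc0)
    rw [add_mul, div_mul_cancel₀ _ (ne_of_gt hc0), one_mul] at this
    exact this
  have hjK : (K : ℝ) < (j : ℝ) := by
    have h1 : (j : ℝ) * c ≤ (j : ℝ) := by
      nlinarith [Nat.cast_nonneg (α := ℝ) j]
    have h2 : (K : ℝ) + 1 ≤ 2 * π * (L : ℝ) := by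
      have : ((L : ℝ)) = (K : ℝ) + 1 := by exact_mod_cast rfl
      nlinarith [Real.pi_gt_three]
    linarith
  have hjK' : K ≤ j := by exact_mod_cast hjK.le
  have hj1 : 1 ≤ j := by
    by_contra h
    push_neg at h
    interval_cases j
    simp at hjc_ge
    nlinarith
  refine ⟨1 + j * p, ?_, by omega, ?_⟩
  · have hjp : j ≤ j * p := Nat.le_mul_of_pos_right j (by omega)
    omega
  have hkey : ((1 + j * p : ℕ) : ℝ) * θ - θ = (j : ℝ) * s + 2 * π * ((j : ℝ) * q) := by
    push_cast
    rw [hs]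
    ring
  rcases abs_choice s with hcs | hcs
  · refine ⟨(j : ℤ) * q + L, ?_⟩
    have heq : ((1 + j * p : ℕ) : ℝ) * θ - θ - 2 * π * (((j : ℤ) * q + (L : ℤ) : ℤ) : ℝ)
        = (j : ℝ) * c - 2 * π * L := by
      rw [hc, hcs]
      push_cast at hkey ⊢
      linear_combination hkey
    rw [heq, abs_of_nonneg (by linarith)]
    linarith
  · refine ⟨(j : ℤ) * q - L, ?_⟩
    have hsc : s = -c := by rw [hc]; linarith [hcs]
    have heq : ((1 + j * p : ℕ) : ℝ) * θ - θ - 2 * π * (((j : ℤ) * q - (L : ℤ) : ℤ) : ℝ)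
        = 2 * π * L - (j : ℝ) * c := by
      rw [hsc] at hkey
      push_cast at hkey ⊢
      linarith [hkey]
    rw [heq, abs_of_nonpos (by linarith), neg_sub]
    linarith


/-- The mass ratio `μ(y_{k+1})/μ(y_k) = ((k − 1/2)/(k + 1/2))²` is not a rational
function of the lattice points `x_k = cos kθ` and `y_k = cos((k − 1/2)θ)`: no pair of
real bivariate polynomials `P, Q` satisfies
`P(x_k, y_k)/Q(x_k, y_k) = ((k − 1/2)/(k + 1/2))²` with `Q(x_k, y_k) ≠ 0` for all
`k ≥ 1`. Hence the measure with masses `(k − 1/2)⁻²` at `y_k` is not semi-classical. -/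
theorem stmt_17 (θ : ℝ) (hθ : Irrational (θ / π)) :
    ¬ ∃ P Q : MvPolynomial (Fin 2) ℝ,
      ∀ k : ℕ, 1 ≤ k →
        MvPolynomial.eval
            ![Real.cos ((k : ℝ) * θ), Real.cos (((k : ℝ) - 1 / 2) * θ)] Q ≠ 0 ∧
        MvPolynomial.eval
            ![Real.cos ((k : ℝ) * θ), Real.cos (((k : ℝ) - 1 / 2) * θ)] P /
          MvPolynomial.eval
            ![Real.cos ((k : ℝ) * θ), Real.cos (((k : ℝ) - 1 / 2) * θ)] Q =
          (((k : ℝ) - 1 / 2) / ((k : ℝ) + 1 / 2)) ^ 2 := by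
  rintro ⟨P, Q, h⟩
  have hπ : (0 : ℝ) < π := Real.pi_pos
  set f : ℝ → ℝ := fun t => MvPolynomial.eval ![Real.cos t, Real.cos (t - θ / 2)] Q with hf
  set g : ℝ → ℝ := fun t => MvPolynomial.eval ![Real.cos t, Real.cos (t - θ / 2)] P with hg
  have hcontvec : Continuous fun t : ℝ => (![Real.cos t, Real.cos (t - θ / 2)] : Fin 2 → ℝ) := by
    refine continuous_pi fun i => ?_
    fin_cases i
    · simpa using Real.continuous_cos
    · simpa using (Real.continuous_cos.comp' (continuous_id.sub continuous_const) :
        Continuous fun t : ℝ => Real.cos (t - θ / 2))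
  have hfc : Continuous f := (MvPolynomial.continuous_eval Q).comp hcontvec
  have hgc : Continuous g := (MvPolynomial.continuous_eval P).comp hcontvec
  have hvec : ∀ (k : ℕ) (M : ℤ),
      (![Real.cos ((k : ℝ) * θ - 2 * π * M), Real.cos ((k : ℝ) * θ - 2 * π * M - θ / 2)] :
        Fin 2 → ℝ)
      = ![Real.cos ((k : ℝ) * θ), Real.cos (((k : ℝ) - 1 / 2) * θ)] := by
    intro k M
    have h0 : Real.cos ((k : ℝ) * θ - 2 * π * M) = Real.cos ((k : ℝ) * θ) := by
      rw [show (k : ℝ) * θ - 2 * π * M = (k : ℝ) * θ + (-M : ℤ) * (2 * π) by push_cast; ring,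
        Real.cos_add_int_mul_two_pi]
    have h1 : Real.cos ((k : ℝ) * θ - 2 * π * M - θ / 2)
        = Real.cos (((k : ℝ) - 1 / 2) * θ) := by
      rw [show (k : ℝ) * θ - 2 * π * M - θ / 2 = ((k : ℝ) - 1 / 2) * θ + (-M : ℤ) * (2 * π) by
        push_cast; ring, Real.cos_add_int_mul_two_pi]
    rw [h0, h1]
  have hseq : ∀ n : ℕ, ∃ k : ℕ, n ≤ k ∧ 1 ≤ k ∧
      ∃ M : ℤ, |(k : ℝ) * θ - θ - 2 * π * M| < 1 / (n + 1) :=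
    fun n => lemB θ hθ (by positivity) n
  choose k hkn hk1 M hM using hseq
  set t : ℕ → ℝ := fun n => (k n : ℝ) * θ - 2 * π * (M n) with ht
  have htθ : Tendsto t atTop (nhds θ) := by
    rw [tendsto_iff_dist_tendsto_zero]
    refine squeeze_zero (fun n => dist_nonneg) (fun n => ?_)
      tendsto_one_div_add_atTop_nhds_zero_nat
    rw [Real.dist_eq]
    have he : t n - θ = (k n : ℝ) * θ - θ - 2 * π * (M n) := by rw [ht]; ring
    rw [he]
    exact (hM n).le
  have hfv : ∀ n, f (t n)
      = MvPolynomial.eval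
          ![Real.cos ((k n : ℝ) * θ), Real.cos (((k n : ℝ) - 1 / 2) * θ)] Q := by
    intro n
    simp only [hf, ht]
    exact congrArg (fun v => MvPolynomial.eval v Q) (hvec (k n) (M n))
  have hgv : ∀ n, g (t n)
      = MvPolynomial.eval
          ![Real.cos ((k n : ℝ) * θ), Real.cos (((k n : ℝ) - 1 / 2) * θ)] P := by
    intro n
    simp only [hg, ht]
    exact congrArg (fun v => MvPolynomial.eval v P) (hvec (k n) (M n))
  have heval : ∀ n, g (t n) = (((k n : ℝ) - 1 / 2) / ((k n : ℝ) + 1 / 2)) ^ 2 * f (t n) := by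
    intro n
    obtain ⟨hQn, hPQn⟩ := h (k n) (hk1 n)
    rw [div_eq_iff hQn] at hPQn
    rw [hfv n, hgv n]
    exact hPQn
  have hk_top : Tendsto (fun n => (k n : ℝ)) atTop atTop :=
    tendsto_natCast_atTop_atTop.comp (tendsto_atTop_mono hkn tendsto_id)
  have hinv : Tendsto (fun n => ((k n : ℝ) + 1 / 2)⁻¹) atTop (nhds 0) :=
    (tendsto_atTop_add_const_right atTop (1 / 2) hk_top).inv_tendsto_atTop
  have hr : Tendsto (fun n => (((k n : ℝ) - 1 / 2) / ((k n : ℝ) + 1 / 2)) ^ 2) atTop (nhds 1) := by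
    have h2 : Tendsto (fun n => (1 - ((k n : ℝ) + 1 / 2)⁻¹) ^ 2) atTop (nhds 1) := by
      have := ((tendsto_const_nhds (α := ℕ) (f := atTop) (x := (1 : ℝ))).sub hinv).pow 2
      simpa using this
    refine h2.congr fun n => ?_
    have hpos : (0 : ℝ) < (k n : ℝ) + 1 / 2 := by positivity
    rw [div_pow]
    field_simp
    ring
  have lim1 : Tendsto (fun n => g (t n)) atTop (nhds (g θ)) := (hgc.tendsto θ).comp htθ
  have lim2 : Tendsto (fun n => (((k n : ℝ) - 1 / 2) / ((k n : ℝ) + 1 / 2)) ^ 2 * f (t n))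
      atTop (nhds (1 * f θ)) := hr.mul ((hfc.tendsto θ).comp htθ)
  have hgf : g θ = f θ := by
    have := tendsto_nhds_unique (lim1.congr heval) lim2
    simpa using this
  obtain ⟨hQ1, hPQ1⟩ := h 1 le_rfl
  have hv1 : (![Real.cos (((1 : ℕ) : ℝ) * θ), Real.cos ((((1 : ℕ) : ℝ) - 1 / 2) * θ)] :
      Fin 2 → ℝ) = ![Real.cos θ, Real.cos (θ - θ / 2)] := by
    have e0 : ((1 : ℕ) : ℝ) * θ = θ := by push_cast; ring
    have e1 : (((1 : ℕ) : ℝ) - 1 / 2) * θ = θ - θ / 2 := by push_cast; ring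
    rw [e0, e1]
  rw [div_eq_iff hQ1] at hPQ1
  rw [hv1] at hQ1 hPQ1
  have hfθ : f θ ≠ 0 := hQ1
  have hr1 : ((((1 : ℕ) : ℝ) - 1 / 2) / (((1 : ℕ) : ℝ) + 1 / 2)) ^ 2 = 1 / 9 := by norm_num
  rw [hr1] at hPQ1
  -- hPQ1 : g θ = (1/9) * f θ, and hgf : g θ = f θ
  have hgθe : g θ = MvPolynomial.eval ![Real.cos θ, Real.cos (θ - θ / 2)] P := rfl
  have hfθe : f θ = MvPolynomial.eval ![Real.cos θ, Real.cos (θ - θ / 2)] Q := rfl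
  have : f θ = 1 / 9 * f θ := by
    conv_lhs => rw [← hgf]
    rw [hgθe, hfθe]
    exact hPQ1
  have : f θ = 0 := by linarith
  exact hfθ this
end
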